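/- For every (x1, x3, x5) ∈ [1, ∞)³, there exists exactly one triple (x2, x4, x6) ∈ (1/2, ∞)³ satisfying the system (E): x1 = 2·x2·x4 − (1/2)·(x2/x4 + x4/x2), x3 = 2·x4·x6 − (1/2)·(x4/x6 + x6/x4), x5 = 2·x2·x6 − (1/2)·(x2/x6 + x6/x2). (Hence every decorated 3-1 type hyperbolic tetrahedron whose ideal vertex triangle is an equilateral triangle of side length 1 is uniquely determined by the lengths of its three hyper-ideal edges.) -/

import Mathlib

/-!
For `a ≥ 1/2` the map `edgeCosh a` is strictly increasing on `(0, ∞)`, and for `a > 1/2` the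
equation `edgeCosh a b = x` is a quadratic in `b` with the explicit positive root `solveEdge x a`.
Existence: the first and third equations are solved by `b = solveEdge x1 a`, `c = solveEdge x5 a`,
and the intermediate value theorem in `a` solves `edgeCosh b c = x3`; near `a = 1/2` both roots
are large, while for `a ≥ max x1 x5` both are at most `1`. Uniqueness: if `a' < a` for two
solutions, monotonicity forces `b < b'` and `c < c'`, hence `edgeCosh b c < edgeCosh b' c'`.
-/

open Set

namespace EdgeSystem

noncomputable def edgeCosh (a b : ℝ) : ℝ := 2 * a * b - (1/2) * (a / b + b / a)

lemma edgeCosh_comm (a b : ℝ) : edgeCosh a b = edgeCosh b a := by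
  unfold edgeCosh; ring

lemma edgeCosh_sub_edgeCosh {a b b' : ℝ} (ha : a ≠ 0) (hb : b ≠ 0) (hb' : b' ≠ 0) :
    edgeCosh a b' - edgeCosh a b = (b' - b) * ((4 * a^2 - 1) / (2 * a) + a / (2 * b * b')) := by
  unfold edgeCosh; field_simp; ring

lemma strictMonoOn_edgeCosh {a : ℝ} (ha : 1/2 ≤ a) : StrictMonoOn (edgeCosh a) (Ioi 0) := by
  intro b hb b' hb' hbb'
  rw [mem_Ioi] at hb hb'
  have hslope : 0 < (4 * a^2 - 1) / (2 * a) + a / (2 * b * b') := by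
    have : 0 ≤ 4 * a^2 - 1 := by nlinarith
    positivity
  have := edgeCosh_sub_edgeCosh (by positivity) hb.ne' hb'.ne' (a := a)
  nlinarith [mul_pos (sub_pos.2 hbb') hslope]

lemma strictMonoOn_edgeCosh_Ioi_half {a : ℝ} (ha : 1/2 ≤ a) :
    StrictMonoOn (edgeCosh a) (Ioi (1/2)) :=
  (strictMonoOn_edgeCosh ha).mono (Ioi_subset_Ioi (by norm_num))

lemma edgeCosh_lt_edgeCosh_left {a a' b : ℝ} (ha : 0 < a) (hb : 1/2 ≤ b) (h : a < a') :
    edgeCosh a b < edgeCosh a' b := by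
  rw [edgeCosh_comm a, edgeCosh_comm a']
  exact strictMonoOn_edgeCosh hb ha (ha.trans h) h

lemma _root_.ContinuousOn.edgeCosh {f g : ℝ → ℝ} {s : Set ℝ} (hf : ContinuousOn f s)
    (hg : ContinuousOn g s) (hf0 : ∀ t ∈ s, f t ≠ 0) (hg0 : ∀ t ∈ s, g t ≠ 0) :
    ContinuousOn (fun t => edgeCosh (f t) (g t)) s := by
  unfold EdgeSystem.edgeCosh
  fun_prop (disch := assumption)

lemma edgeCosh_half_right_neg {a : ℝ} (ha : 0 < a) : edgeCosh a (1/2) < 0 := by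
  have : edgeCosh a (1/2) = -1 / (4 * a) := by unfold edgeCosh; field_simp; ring
  rw [this]; exact div_neg_of_neg_of_pos (by norm_num) (by positivity)

lemma edgeCosh_le_one {b c : ℝ} (hb : 0 < b) (hb1 : b ≤ 1) (hc : 0 < c) (hc1 : c ≤ 1) :
    edgeCosh b c ≤ 1 := by
  have amgm : 2 ≤ b / c + c / b := by
    rw [div_add_div _ _ hc.ne' hb.ne', le_div_iff₀ (by positivity)]
    nlinarith [sq_nonneg (b - c)]
  unfold edgeCosh
  nlinarith [mul_le_one₀ hb1 hc.le hc1]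

lemma le_edgeCosh {y b c : ℝ} (hy : 1 ≤ y) (hb : y ≤ b) (hc : y ≤ c) :
    y ≤ edgeCosh b c := by
  have h1 : b / c ≤ b := div_le_self (by linarith) (by linarith)
  have h2 : c / b ≤ c := div_le_self (by linarith) (by linarith)
  unfold edgeCosh
  nlinarith

lemma edgeCosh_near_half_le_one {y : ℝ} (hy : 0 < y) : edgeCosh (1/2 + 1 / (8 * y)) y ≤ 1 := by
  unfold edgeCosh
  field_simp
  nlinarith

lemma self_le_edgeCosh_one {a : ℝ} (ha : 1 ≤ a) : a ≤ edgeCosh a 1 := by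
  have : 1 / a ≤ 1 := by rw [div_le_one (by linarith)]; exact ha
  unfold edgeCosh
  field_simp
  nlinarith

section

/-- The positive root `b` of `(4a² - 1) b² - 2 a x b - a² = 0`, which is `edgeCosh a b = x`
cleared of denominators. -/
noncomputable def solveEdge (x a : ℝ) : ℝ := a * (x + √(x^2 + 4 * a^2 - 1)) / (4 * a^2 - 1)

variable {x a : ℝ}

lemma solveEdge_pos (ha : 1/2 < a) : 0 < solveEdge x a := by
  have hd : 0 < 4 * a^2 - 1 := by nlinarith
  have hs : |x| < √(x^2 + 4 * a^2 - 1) := by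
    rw [← Real.sqrt_sq_eq_abs]; exact Real.sqrt_lt_sqrt (sq_nonneg x) (by linarith)
  have hnum : 0 < x + √(x^2 + 4 * a^2 - 1) := by linarith [neg_abs_le x]
  exact div_pos (mul_pos (by linarith) hnum) hd

lemma edgeCosh_solveEdge (ha : 1/2 < a) : edgeCosh a (solveEdge x a) = x := by
  have hd : 0 < 4 * a^2 - 1 := by nlinarith
  have hb := solveEdge_pos (x := x) ha
  have hs : √(x^2 + 4 * a^2 - 1) ^ 2 = x^2 + 4 * a^2 - 1 := Real.sq_sqrt (by nlinarith)
  have hroot : (4 * a^2 - 1) * solveEdge x a ^ 2 - 2 * a * x * solveEdge x a - a^2 = 0 := by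
    unfold solveEdge
    field_simp
    linear_combination a^2 * hs
  unfold edgeCosh
  field_simp
  linear_combination hroot

lemma lt_solveEdge_iff {b : ℝ} (ha : 1/2 < a) (hb : 0 < b) :
    b < solveEdge x a ↔ edgeCosh a b < x := by
  conv_rhs => rw [← edgeCosh_solveEdge (x := x) ha]
  exact ((strictMonoOn_edgeCosh ha.le).lt_iff_lt hb (solveEdge_pos ha)).symm

lemma le_solveEdge_iff {b : ℝ} (ha : 1/2 < a) (hb : 0 < b) :
    b ≤ solveEdge x a ↔ edgeCosh a b ≤ x := by
  conv_rhs => rw [← edgeCosh_solveEdge (x := x) ha]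
  exact ((strictMonoOn_edgeCosh ha.le).le_iff_le hb (solveEdge_pos ha)).symm

lemma half_lt_solveEdge (ha : 1/2 < a) (hx : 0 ≤ x) : 1/2 < solveEdge x a :=
  (lt_solveEdge_iff ha (by norm_num)).2 ((edgeCosh_half_right_neg (by linarith)).trans_le hx)

lemma continuousOn_solveEdge (x : ℝ) : ContinuousOn (solveEdge x) (Ioi (1/2)) := by
  unfold solveEdge
  refine ContinuousOn.div (by fun_prop) (by fun_prop) fun a ha => ?_
  rw [mem_Ioi] at ha
  nlinarith

lemma solveEdge_le_iff {b : ℝ} (ha : 1/2 < a) (hb : 0 < b) :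
    solveEdge x a ≤ b ↔ x ≤ edgeCosh a b := by
  rw [← not_lt, lt_solveEdge_iff ha hb, not_lt]

end

section

variable {a b c a' b' c' : ℝ}

lemma le_of_edgeCosh_eq (hb : 1/2 < b) (hc : 1/2 < c)
    (ha' : 1/2 < a') (hb' : 1/2 < b') (hc' : 1/2 < c')
    (eab : edgeCosh a b = edgeCosh a' b') (ebc : edgeCosh b c = edgeCosh b' c')
    (eac : edgeCosh a c = edgeCosh a' c') : a ≤ a' := by
  by_contra! h
  have hmono := strictMonoOn_edgeCosh_Ioi_half ha'.le
  have hbb' : b < b' := (hmono.lt_iff_lt hb hb').1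
    (eab ▸ edgeCosh_lt_edgeCosh_left (by linarith) hb.le h)
  have hcc' : c < c' := (hmono.lt_iff_lt hc hc').1
    (eac ▸ edgeCosh_lt_edgeCosh_left (by linarith) hc.le h)
  have : edgeCosh b c < edgeCosh b' c' :=
    (edgeCosh_lt_edgeCosh_left (by linarith) hc.le hbb').trans
      (strictMonoOn_edgeCosh_Ioi_half hb'.le hc hc' hcc')
  exact this.ne ebc

lemma eq_of_edgeCosh_eq (ha : 1/2 < a) (hb : 1/2 < b) (hc : 1/2 < c)
    (ha' : 1/2 < a') (hb' : 1/2 < b') (hc' : 1/2 < c')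
    (eab : edgeCosh a b = edgeCosh a' b') (ebc : edgeCosh b c = edgeCosh b' c')
    (eac : edgeCosh a c = edgeCosh a' c') : a = a' ∧ b = b' ∧ c = c' := by
  obtain rfl : a = a' := le_antisymm (le_of_edgeCosh_eq hb hc ha' hb' hc' eab ebc eac)
    (le_of_edgeCosh_eq hb' hc' ha hb hc eab.symm ebc.symm eac.symm)
  have hinj := (strictMonoOn_edgeCosh_Ioi_half ha.le).injOn
  exact ⟨rfl, hinj hb hb' eab, hinj hc hc' eac⟩

end

lemma exists_edgeCosh_solveEdge_eq {x1 x3 x5 : ℝ} (h1 : 1 ≤ x1) (h3 : 1 ≤ x3)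
    (h5 : 1 ≤ x5) : ∃ a, 1/2 < a ∧ edgeCosh (solveEdge x1 a) (solveEdge x5 a) = x3 := by
  set a₀ := 1/2 + 1 / (8 * x3) with ha₀_def
  set a₁ := max x1 x5
  have ha₀ : 1/2 < a₀ := by
    have : 0 < 1 / (8 * x3) := by positivity
    linarith
  have ha₀₁ : a₀ ≤ a₁ := by
    have : 1 / (8 * x3) ≤ 1 / 8 := by rw [div_le_div_iff₀ (by linarith) (by norm_num)]; linarith
    linarith [le_max_left x1 x5]
  have ha₁ : 1/2 < a₁ := ha₀.trans_le ha₀₁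
  have hlarge : ∀ x, 1 ≤ x → x3 ≤ solveEdge x a₀ := fun x hx =>
    (le_solveEdge_iff ha₀ (by linarith)).2 ((edgeCosh_near_half_le_one (by linarith)).trans hx)
  have hsmall : ∀ x ≤ a₁, solveEdge x a₁ ≤ 1 := fun x hx => (solveEdge_le_iff ha₁ one_pos).2
    (hx.trans (self_le_edgeCosh_one (h1.trans (le_max_left _ _))))
  have hlow : x3 ≤ edgeCosh (solveEdge x1 a₀) (solveEdge x5 a₀) :=
    le_edgeCosh h3 (hlarge x1 h1) (hlarge x5 h5)
  have hupp : edgeCosh (solveEdge x1 a₁) (solveEdge x5 a₁) ≤ x3 :=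
    (edgeCosh_le_one (solveEdge_pos ha₁) (hsmall x1 (le_max_left _ _)) (solveEdge_pos ha₁)
      (hsmall x5 (le_max_right _ _))).trans h3
  have hcont : ContinuousOn (fun a => edgeCosh (solveEdge x1 a) (solveEdge x5 a)) (Ioi (1/2)) :=
    (continuousOn_solveEdge x1).edgeCosh (continuousOn_solveEdge x5)
      (fun a ha => (solveEdge_pos ha).ne') (fun a ha => (solveEdge_pos ha).ne')
  obtain ⟨a, ha, hH⟩ := intermediate_value_Icc' ha₀₁
    (hcont.mono fun a h => ha₀.trans_le h.1) ⟨hupp, hlow⟩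
  exact ⟨a, ha₀.trans_le ha.1, hH⟩

end EdgeSystem

open EdgeSystem in
theorem stmt_6 (x1 x3 x5 : ℝ) (h1 : 1 ≤ x1) (h3 : 1 ≤ x3) (h5 : 1 ≤ x5) :
    ∃! p : ℝ × ℝ × ℝ,
      1/2 < p.1 ∧ 1/2 < p.2.1 ∧ 1/2 < p.2.2 ∧
      x1 = 2 * p.1 * p.2.1 - (1/2) * (p.1 / p.2.1 + p.2.1 / p.1) ∧
      x3 = 2 * p.2.1 * p.2.2 - (1/2) * (p.2.1 / p.2.2 + p.2.2 / p.2.1) ∧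
      x5 = 2 * p.1 * p.2.2 - (1/2) * (p.1 / p.2.2 + p.2.2 / p.1) := by
  obtain ⟨a, ha, hbc⟩ := exists_edgeCosh_solveEdge_eq h1 h3 h5
  have hb := half_lt_solveEdge (x := x1) ha (by linarith)
  have hc := half_lt_solveEdge (x := x5) ha (by linarith)
  have hab : edgeCosh a (solveEdge x1 a) = x1 := edgeCosh_solveEdge ha
  have hac : edgeCosh a (solveEdge x5 a) = x5 := edgeCosh_solveEdge ha
  refine ⟨(a, solveEdge x1 a, solveEdge x5 a),
    ⟨ha, hb, hc, hab.symm, hbc.symm, hac.symm⟩, ?_⟩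
  rintro ⟨a', b', c'⟩ ⟨ha', hb', hc', eab, ebc, eac⟩
  obtain ⟨rfl, rfl, rfl⟩ := eq_of_edgeCosh_eq ha hb hc ha' hb' hc'
    (hab.trans eab) (hbc.trans ebc) (hac.trans eac)
  rfl
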